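/- arXiv:1103.1211 — 6 statements merged into one kernel-verified Lean document; each statement's English description precedes it below -/
import Mathlib

section
/- Under the hypotheses of the previous setup (scaling function f, distortion function α with ∑ α(2n+1) f(n) < ∞), the function K(ε) := min { r : ∑_{s=r}^∞ α(2s+1) f(s) ≤ ε/2 } is a Karlsson function for the pair (f, α): for every α-distorted path γ in a connected graph with vertex v, d(v, Im γ) ≤ K(length_{δ_{v,f}} γ). -/
open Filter Topology


/-- K(ε) := min { r : ∑_{s=r}^∞ α(2s+1) f(s) ≤ ε/2 } is a Karlsson
function for (f, α): d(v, Im γ) ≤ K(length_{δ_{v,f}} γ) for α-distorted paths γ. -/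
theorem karlsson_function_for_appropriate_pair
    {A : Type*} (Γ : SimpleGraph A) (hconn : Γ.Connected)
    -- f is a positive scaling function with ∑ f < ∞
    (f : ℕ → ℝ) (hf_pos : ∀ n, 0 < f n) (hf_anti : ∀ n, f (n + 1) ≤ f n)
    (lam : ℝ) (hlam : 0 < lam) (hdecay : ∀ n, lam * f n ≤ f (n + 1))
    (hf_sum : Summable f)
    -- α is a distortion function
    (α : ℕ → ℝ) (hα_mono : Monotone α) (hα_ge : ∀ n : ℕ, (n : ℝ) ≤ α n)
    -- the key summability hypothesis
    (hsum : Summable (fun n => α (2 * n + 1) * f n))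
    -- δ is the Floyd metric based at v with scaling function f:
    -- the maximal metric with δ(x,y) ≤ f(d(v,{x,y})) on edges
    (v : A) (δ : A → A → ℝ)
    (hδ_self : ∀ x, δ x x = 0)
    (hδ_symm : ∀ x y, δ x y = δ y x)
    (hδ_nonneg : ∀ x y, 0 ≤ δ x y)
    (hδ_tri : ∀ x y z, δ x z ≤ δ x y + δ y z)
    (hδ_edge : ∀ x y, Γ.Adj x y → δ x y ≤ f (min (Γ.dist v x) (Γ.dist v y)))
    (hδ_max : ∀ ρ : A → A → ℝ, (∀ x, ρ x x = 0) → (∀ x y, ρ x y = ρ y x) →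
      (∀ x y, 0 ≤ ρ x y) → (∀ x y z, ρ x z ≤ ρ x y + ρ y z) →
      (∀ x y, Γ.Adj x y → ρ x y ≤ f (min (Γ.dist v x) (Γ.dist v y))) →
      ∀ x y, ρ x y ≤ δ x y)
    -- γ is an α-distorted path
    (n : ℕ) (γ : Fin (n + 1) → A)
    (hadj : ∀ i : Fin n, Γ.Adj (γ i.castSucc) (γ i.succ))
    (hdistorted : ∀ i j : Fin (n + 1), i ≤ j →
      ((j : ℕ) - (i : ℕ) : ℝ) ≤ α (Γ.dist (γ i) (γ j)))
    -- the Karlsson function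
    (K : ℝ → ℕ)
    (hK : ∀ ε : ℝ, 0 < ε →
      K ε = sInf {r : ℕ | (∑' s : ℕ, if r ≤ s then α (2 * s + 1) * f s else 0) ≤ ε / 2})
    -- the Floyd length of γ (positive, as K is defined on ℝ_{>0})
    (L : ℝ) (hL : L = ∑ i : Fin n, δ (γ i.castSucc) (γ i.succ)) (hLpos : 0 < L) :
    (⨅ i, Γ.dist v (γ i)) ≤ K L := by
  by_contra hcon
  push_neg at hcon
  -- basic facts
  have hf_nonneg : ∀ s, 0 ≤ f s := fun s => (hf_pos s).le
  have hα0 : ∀ m : ℕ, 0 ≤ α m := fun m => le_trans (by exact_mod_cast Nat.zero_le m) (hα_ge m)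
  have hg0 : ∀ s : ℕ, 0 ≤ α (2 * s + 1) * f s := fun s => mul_nonneg (hα0 _) (hf_nonneg s)
  have hlam1 : lam ≤ 1 := by
    have h1 := hdecay 0
    have h2 := hf_anti 0
    nlinarith [hf_pos 0]
  -- summability of tails
  have hsummT : ∀ r : ℕ, Summable (fun s => if r ≤ s then α (2 * s + 1) * f s else 0) := by
    intro r
    apply Summable.of_nonneg_of_le (fun s => ?_) (fun s => ?_) hsum
    · split
      · exact hg0 _
      · exact le_rfl
    · split <;> simp [hg0]
  -- tail formula
  have htail : ∀ r : ℕ, (∑' s : ℕ, if r ≤ s then α (2 * s + 1) * f s else 0)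
      = (∑' s : ℕ, α (2 * s + 1) * f s) - ∑ s ∈ Finset.range r, α (2 * s + 1) * f s := by
    intro r
    have hs2 : Summable (fun s => if r ≤ s then 0 else α (2 * s + 1) * f s) := by
      apply Summable.of_nonneg_of_le (fun s => ?_) (fun s => ?_) hsum
      · split
        · exact le_rfl
        · exact hg0 _
      · split <;> simp [hg0]
    have hsplit : (∑' s : ℕ, α (2 * s + 1) * f s)
        = (∑' s : ℕ, if r ≤ s then α (2 * s + 1) * f s else 0)
          + ∑' s : ℕ, if r ≤ s then 0 else α (2 * s + 1) * f s := by
      rw [← Summable.tsum_add (hsummT r) hs2]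
      congr 1; funext s; split <;> ring
    have hfin : (∑' s : ℕ, if r ≤ s then 0 else α (2 * s + 1) * f s)
        = ∑ s ∈ Finset.range r, α (2 * s + 1) * f s := by
      rw [tsum_eq_sum (s := Finset.range r) (fun s hs => by
        simp only [Finset.mem_range, not_lt] at hs; simp [hs])]
      exact Finset.sum_congr rfl (fun s hs => by
        simp only [Finset.mem_range] at hs; simp [not_le.mpr hs])
    rw [hsplit, hfin]; ring
  -- K L belongs to the defining set
  have hKmem : (∑' s : ℕ, if K L ≤ s then α (2 * s + 1) * f s else 0) ≤ L / 2 := by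
    have hTto : Tendsto (fun r : ℕ => ∑' s : ℕ, if r ≤ s then α (2 * s + 1) * f s else 0)
        atTop (𝓝 0) := by
      have h1 : Tendsto (fun r : ℕ => (∑' s : ℕ, α (2 * s + 1) * f s)
          - ∑ s ∈ Finset.range r, α (2 * s + 1) * f s) atTop (𝓝 0) := by
        have := (tendsto_const_nhds (x := ∑' s : ℕ, α (2 * s + 1) * f s)
          (f := atTop (α := ℕ))).sub hsum.hasSum.tendsto_sum_nat
        simpa using this
      exact h1.congr (fun r => (htail r).symm)
    have hne : {r : ℕ | (∑' s : ℕ, if r ≤ s then α (2 * s + 1) * f s else 0) ≤ L / 2}.Nonempty := by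
      obtain ⟨r, hr⟩ := (hTto.eventually_lt_const (by linarith : (0:ℝ) < L / 2)).exists
      exact ⟨r, hr.le⟩
    have := Nat.sInf_mem hne
    rwa [← hK L hLpos] at this
  set r₀ : ℕ := K L + 1 with hr₀def
  have hr₀pos : 1 ≤ r₀ := Nat.le_add_left 1 (K L)
  -- all vertices of γ are far from v
  have hfar : ∀ k : Fin (n + 1), r₀ ≤ Γ.dist v (γ k) := by
    intro k
    have h1 : (⨅ i, Γ.dist v (γ i)) ≤ Γ.dist v (γ k) := Nat.sInf_le ⟨k, rfl⟩
    omega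
  -- the min distance of an edge
  set m : Fin n → ℕ := fun i => min (Γ.dist v (γ i.castSucc)) (Γ.dist v (γ i.succ)) with hmdef
  have hm_far : ∀ i, r₀ ≤ m i := fun i => le_min (hfar _) (hfar _)
  -- per-edge Floyd bound
  have hedge : ∀ i : Fin n, δ (γ i.castSucc) (γ i.succ) ≤ f (m i) := fun i => hδ_edge _ _ (hadj i)
  -- telescoping: summands
  set Δ : ℕ → ℝ := fun s => f s - f (s + 1) with hΔdef
  have hΔ0 : ∀ s, 0 ≤ Δ s := fun s => sub_nonneg.mpr (hf_anti s)
  have hΔle : ∀ s, Δ s ≤ (1 - lam) * f s := by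
    intro s; have := hdecay s; simp only [hΔdef]; nlinarith
  have hΔsumm : Summable Δ := hf_sum.sub ((summable_nat_add_iff 1).mpr hf_sum)
  have hFsumm : ∀ s₀ : ℕ, Summable (fun s => if s₀ ≤ s then Δ s else 0) := by
    intro s₀
    apply Summable.of_nonneg_of_le (fun s => ?_) (fun s => ?_) hΔsumm
    · split
      · exact hΔ0 _
      · exact le_rfl
    · split <;> simp [hΔ0]
  have htel : ∀ s₀ : ℕ, (∑' s : ℕ, if s₀ ≤ s then Δ s else 0) = f s₀ := by
    intro s₀
    have hps : ∀ N : ℕ, s₀ ≤ N →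
        ∑ s ∈ Finset.range N, (if s₀ ≤ s then Δ s else 0) = f s₀ - f N := by
      intro N hN
      induction N, hN using Nat.le_induction with
      | base =>
        rw [Finset.sum_eq_zero, sub_self]
        intro s hs; simp only [Finset.mem_range] at hs; simp [not_le.mpr hs]
      | succ N hN ih =>
        rw [Finset.sum_range_succ, ih, if_pos hN]
        simp only [hΔdef]; ring
    have h1 : Tendsto (fun N : ℕ => ∑ s ∈ Finset.range N, (if s₀ ≤ s then Δ s else 0))
        atTop (𝓝 (∑' s : ℕ, if s₀ ≤ s then Δ s else 0)) :=
      (hFsumm s₀).hasSum.tendsto_sum_nat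
    have h2 : Tendsto (fun N : ℕ => ∑ s ∈ Finset.range N, (if s₀ ≤ s then Δ s else 0))
        atTop (𝓝 (f s₀)) := by
      have h3 : Tendsto (fun N : ℕ => f s₀ - f N) atTop (𝓝 (f s₀)) := by
        have := (tendsto_const_nhds (x := f s₀) (f := atTop (α := ℕ))).sub
          hf_sum.tendsto_atTop_zero
        simpa using this
      apply h3.congr'
      filter_upwards [eventually_ge_atTop s₀] with N hN
      exact (hps N hN).symm
    exact tendsto_nhds_unique h1 h2
  -- edge count bound
  set c : ℕ → ℕ := fun s => (Finset.univ.filter (fun i : Fin n => m i ≤ s)).card with hcdef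
  have hc_empty : ∀ s : ℕ, s < r₀ → c s = 0 := by
    intro s hs
    simp only [hcdef, Finset.card_eq_zero, Finset.filter_eq_empty_iff]
    intro i _
    have := hm_far i; omega
  have hc_bound : ∀ s : ℕ, r₀ ≤ s → (c s : ℝ) ≤ 2 * α (2 * s + 1) := by
    intro s hs
    have hs1 : 1 ≤ s := le_trans hr₀pos hs
    have hα_big : (3 : ℝ) ≤ α (2 * s + 1) := by
      have h1 : ((2 * s + 1 : ℕ) : ℝ) ≤ α (2 * s + 1) := hα_ge _
      have hs1' : (1:ℝ) ≤ (s:ℝ) := by exact_mod_cast hs1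
      push_cast at h1
      linarith
    rcases Finset.eq_empty_or_nonempty
      (Finset.univ.filter (fun i : Fin n => m i ≤ s)) with he | hne
    · have h5 := hα0 (2 * s + 1)
      simp only [hcdef, he, Finset.card_empty, Nat.cast_zero]
      linarith
    · set i := (Finset.univ.filter (fun i : Fin n => m i ≤ s)).min' hne with hidef
      set j := (Finset.univ.filter (fun i : Fin n => m i ≤ s)).max' hne with hjdef
      have hij : i ≤ j := Finset.min'_le _ _ (Finset.max'_mem _ hne)
      have hmi : m i ≤ s := (Finset.mem_filter.mp (Finset.min'_mem _ hne)).2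
      have hmj : m j ≤ s := (Finset.mem_filter.mp (Finset.max'_mem _ hne)).2
      -- card bound via Icc
      have hsub : (Finset.univ.filter (fun i : Fin n => m i ≤ s)) ⊆ Finset.Icc i j := by
        intro x hx
        exact Finset.mem_Icc.mpr ⟨Finset.min'_le _ _ hx, Finset.le_max' _ _ hx⟩
      have hcard : c s ≤ (j : ℕ) + 1 - (i : ℕ) := by
        calc c s ≤ (Finset.Icc i j).card := Finset.card_le_card hsub
        _ = (j : ℕ) + 1 - (i : ℕ) := Fin.card_Icc i j
      have hcard' : (c s : ℝ) ≤ (j : ℕ) + 1 - (i : ℕ) := by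
        have hij' : (i : ℕ) ≤ (j : ℕ) := hij
        have : ((c s : ℕ) : ℝ) ≤ (((j : ℕ) + 1 - (i : ℕ) : ℕ) : ℝ) := by exact_mod_cast hcard
        rw [Nat.cast_sub (by omega)] at this
        push_cast at this
        linarith
      -- witnesses
      have hwit : ∀ k : Fin n, m k ≤ s → ∃ a : Fin (n + 1),
          (a : ℕ) = (k : ℕ) ∨ (a : ℕ) = (k : ℕ) + 1 := by
        intro k _
        exact ⟨k.castSucc, Or.inl rfl⟩
      obtain ⟨a, ha_dist, ha_val⟩ : ∃ a : Fin (n + 1), Γ.dist v (γ a) ≤ s ∧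
          ((a : ℕ) = (i : ℕ) ∨ (a : ℕ) = (i : ℕ) + 1) := by
        rcases min_le_iff.mp hmi with h | h
        · exact ⟨i.castSucc, h, Or.inl rfl⟩
        · exact ⟨i.succ, h, Or.inr rfl⟩
      obtain ⟨b, hb_dist, hb_val⟩ : ∃ b : Fin (n + 1), Γ.dist v (γ b) ≤ s ∧
          ((b : ℕ) = (j : ℕ) ∨ (b : ℕ) = (j : ℕ) + 1) := by
        rcases min_le_iff.mp hmj with h | h
        · exact ⟨j.castSucc, h, Or.inl rfl⟩
        · exact ⟨j.succ, h, Or.inr rfl⟩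
      have hav : (a : ℕ) ≤ (i : ℕ) + 1 := by rcases ha_val with h | h <;> omega
      have hbv : (j : ℕ) ≤ (b : ℕ) := by rcases hb_val with h | h <;> omega
      by_cases hab : a ≤ b
      · have hdist : Γ.dist (γ a) (γ b) ≤ 2 * s := by
          calc Γ.dist (γ a) (γ b) ≤ Γ.dist (γ a) v + Γ.dist v (γ b) := hconn.dist_triangle
          _ = Γ.dist v (γ a) + Γ.dist v (γ b) := by rw [Γ.dist_comm]
          _ ≤ s + s := Nat.add_le_add ha_dist hb_dist
          _ = 2 * s := by ring
        have hd := hdistorted a b hab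
        have hmono : α (Γ.dist (γ a) (γ b)) ≤ α (2 * s + 1) :=
          hα_mono (by omega : Γ.dist (γ a) (γ b) ≤ 2 * s + 1)
        have hba : ((b : ℕ) : ℝ) - ((a : ℕ) : ℝ) ≤ α (2 * s + 1) := le_trans hd hmono
        have h1 : ((j : ℕ) : ℝ) + 1 - ((i : ℕ) : ℝ) ≤ ((b : ℕ) : ℝ) - ((a : ℕ) : ℝ) + 2 := by
          have hav' : ((a : ℕ) : ℝ) ≤ ((i : ℕ) : ℝ) + 1 := by exact_mod_cast hav
          have hbv' : ((j : ℕ) : ℝ) ≤ ((b : ℕ) : ℝ) := by exact_mod_cast hbv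
          linarith
        calc (c s : ℝ) ≤ ((j : ℕ) : ℝ) + 1 - ((i : ℕ) : ℝ) := hcard'
        _ ≤ ((b : ℕ) : ℝ) - ((a : ℕ) : ℝ) + 2 := h1
        _ ≤ α (2 * s + 1) + 2 := by linarith
        _ ≤ 2 * α (2 * s + 1) := by linarith
      · push_neg at hab
        have hab' : (b : ℕ) < (a : ℕ) := hab
        have hji : (j : ℕ) ≤ (i : ℕ) := by omega
        calc (c s : ℝ) ≤ ((j : ℕ) : ℝ) + 1 - ((i : ℕ) : ℝ) := hcard'
        _ ≤ 1 := by
          have : ((j : ℕ) : ℝ) ≤ ((i : ℕ) : ℝ) := by exact_mod_cast hji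
          linarith
        _ ≤ 2 * α (2 * s + 1) := by linarith
  -- the main chain of inequalities
  have hchain : L ≤ 2 * (1 - lam) * (∑' s : ℕ, if K L ≤ s then α (2 * s + 1) * f s else 0) := by
    have step1 : L ≤ ∑ i : Fin n, f (m i) := by
      rw [hL]; exact Finset.sum_le_sum (fun i _ => hedge i)
    have step2 : ∑ i : Fin n, f (m i) = ∑' s : ℕ, ∑ i : Fin n, (if m i ≤ s then Δ s else 0) := by
      rw [Summable.tsum_finsetSum (fun i _ => hFsumm (m i))]
      exact Finset.sum_congr rfl (fun i _ => (htel (m i)).symm)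
    have step3 : ∀ s : ℕ, ∑ i : Fin n, (if m i ≤ s then Δ s else 0) = (c s : ℝ) * Δ s := by
      intro s
      have : ∀ i : Fin n, (if m i ≤ s then Δ s else 0)
          = (if m i ≤ s then (1:ℝ) else 0) * Δ s := by
        intro i; split <;> ring
      rw [Finset.sum_congr rfl (fun i _ => this i), ← Finset.sum_mul, Finset.sum_boole]
    have hcΔsumm : Summable (fun s : ℕ => (c s : ℝ) * Δ s) := by
      have : Summable (fun s : ℕ => ∑ i : Fin n, (if m i ≤ s then Δ s else 0)) :=
        summable_sum (fun i _ => hFsumm (m i))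
      exact this.congr step3
    have hpoint : ∀ s : ℕ, (c s : ℝ) * Δ s
        ≤ 2 * (1 - lam) * (if K L ≤ s then α (2 * s + 1) * f s else 0) := by
      intro s
      by_cases hs : r₀ ≤ s
      · rw [if_pos (by omega : K L ≤ s)]
        have h1 := hc_bound s hs
        have h2 := hΔle s
        have h3 := hΔ0 s
        have h4 : (0:ℝ) ≤ (c s : ℝ) := Nat.cast_nonneg _
        have h5 := hα0 (2 * s + 1)
        have h6 := hf_pos s
        nlinarith
      · rw [hc_empty s (by omega)]
        have h0 : (0:ℝ) ≤ (if K L ≤ s then α (2 * s + 1) * f s else 0) := by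
          split <;> simp [hg0]
        rw [Nat.cast_zero, zero_mul]
        exact mul_nonneg (by linarith) h0
    have hRsumm : Summable (fun s : ℕ =>
        2 * (1 - lam) * (if K L ≤ s then α (2 * s + 1) * f s else 0)) :=
      (hsummT (K L)).mul_left _
    calc L ≤ ∑ i : Fin n, f (m i) := step1
    _ = ∑' s : ℕ, ∑ i : Fin n, (if m i ≤ s then Δ s else 0) := step2
    _ = ∑' s : ℕ, (c s : ℝ) * Δ s := tsum_congr step3
    _ ≤ ∑' s : ℕ, 2 * (1 - lam) * (if K L ≤ s then α (2 * s + 1) * f s else 0) :=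
        Summable.tsum_le_tsum hpoint hcΔsumm hRsumm
    _ = 2 * (1 - lam) * (∑' s : ℕ, if K L ≤ s then α (2 * s + 1) * f s else 0) := tsum_mul_left
  -- conclude
  have hT0 : 0 ≤ (∑' s : ℕ, if K L ≤ s then α (2 * s + 1) * f s else 0) :=
    tsum_nonneg (fun s => by split <;> simp [hg0])
  nlinarith [hchain, hKmem, hLpos, hlam, hlam1]
end

section
/- Let a group G act on sets A and B, with A and B both G-finite (finitely many G-orbits). For a G-invariant subset S ⊆ A × B, the following are equivalent: (a) S is G-finite; (b) for every a ∈ A, the set S ∩ ({a} × B) is Stab_G(a)-finite; (c) for every b ∈ B, the set S ∩ (A × {b}) is Stab_G(b)-finite. -/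
open MulAction

private lemma keyF {G A B : Type*} [Group G] [MulAction G A] [MulAction G B]
    (a : A) (b b' : B) (h : (orbitRel (stabilizer G a) B) b b') :
    Quotient.mk (orbitRel G (A × B)) (a, b) = Quotient.mk (orbitRel G (A × B)) (a, b') := by
  obtain ⟨s, hs⟩ := h
  exact Quotient.sound ⟨(s : G), Prod.ext s.2 hs⟩

private def Fmap {G A B : Type*} [Group G] [MulAction G A] [MulAction G B] (a : A) :
    Quotient (orbitRel (stabilizer G a) B) → Quotient (orbitRel G (A × B)) :=
  Quotient.lift (fun b => Quotient.mk (orbitRel G (A × B)) (a, b)) (keyF a)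

private lemma aux_fst {G A B : Type*} [Group G] [MulAction G A] [MulAction G B]
    (hA : Finite (orbitRel.Quotient G A))
    (S : Set (A × B)) (hS : ∀ (g : G), ∀ p ∈ S, g • p ∈ S) :
    (Quotient.mk (orbitRel G (A × B)) '' S).Finite ↔
      ∀ a : A, (Quotient.mk (orbitRel (stabilizer G a) B) '' {b : B | (a, b) ∈ S}).Finite := by
  constructor
  · intro h a
    have hsub : Fmap a '' (Quotient.mk (orbitRel (stabilizer G a) B) '' {b : B | (a, b) ∈ S}) ⊆
        Quotient.mk (orbitRel G (A × B)) '' S := by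
      rintro _ ⟨_, ⟨b, hb, rfl⟩, rfl⟩
      exact ⟨(a, b), hb, rfl⟩
    have hinj : Set.InjOn (Fmap a)
        (Quotient.mk (orbitRel (stabilizer G a) B) '' {b : B | (a, b) ∈ S}) := by
      rintro _ ⟨b, hb, rfl⟩ _ ⟨b', hb', rfl⟩ hxy
      obtain ⟨g, hg⟩ := Quotient.exact hxy
      have hga : g • a = a := congrArg Prod.fst hg
      have hgb : g • b' = b := congrArg Prod.snd hg
      exact Quotient.sound ⟨⟨g, hga⟩, hgb⟩
    exact Set.Finite.of_finite_image (h.subset hsub) hinj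
  · intro h
    have : Finite (Quotient (orbitRel G A)) := hA
    have hfin : (⋃ q : Quotient (orbitRel G A),
        Fmap q.out '' (Quotient.mk (orbitRel (stabilizer G q.out) B) ''
          {b : B | (q.out, b) ∈ S})).Finite :=
      Set.finite_iUnion fun q => (h q.out).image (Fmap q.out)
    refine hfin.subset ?_
    rintro _ ⟨⟨a, b⟩, hab, rfl⟩
    obtain ⟨g, hg⟩ := MulAction.mem_orbit_iff.mp (Quotient.mk_out a (s := orbitRel G A))
    have hgb : ((Quotient.mk (orbitRel G A) a).out, g • b) ∈ S := by
      have := hS g _ hab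
      rwa [Prod.smul_mk, hg] at this
    refine Set.mem_iUnion.mpr ⟨Quotient.mk (orbitRel G A) a,
      ⟨Quotient.mk _ (g • b), ⟨g • b, hgb, rfl⟩, ?_⟩⟩
    show Quotient.mk (orbitRel G (A × B)) (_, g • b) = Quotient.mk (orbitRel G (A × B)) (a, b)
    refine Quotient.sound ⟨g, ?_⟩
    show g • (a, b) = _
    rw [Prod.smul_mk, hg]

private lemma keyF2 {G A B : Type*} [Group G] [MulAction G A] [MulAction G B]
    (b : B) (a a' : A) (h : (orbitRel (stabilizer G b) A) a a') :
    Quotient.mk (orbitRel G (A × B)) (a, b) = Quotient.mk (orbitRel G (A × B)) (a', b) := by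
  obtain ⟨s, hs⟩ := h
  exact Quotient.sound ⟨(s : G), Prod.ext hs s.2⟩

private def Fmap2 {G A B : Type*} [Group G] [MulAction G A] [MulAction G B] (b : B) :
    Quotient (orbitRel (stabilizer G b) A) → Quotient (orbitRel G (A × B)) :=
  Quotient.lift (fun a => Quotient.mk (orbitRel G (A × B)) (a, b)) (keyF2 b)

private lemma aux_snd {G A B : Type*} [Group G] [MulAction G A] [MulAction G B]
    (hB : Finite (orbitRel.Quotient G B))
    (S : Set (A × B)) (hS : ∀ (g : G), ∀ p ∈ S, g • p ∈ S) :
    (Quotient.mk (orbitRel G (A × B)) '' S).Finite ↔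
      ∀ b : B, (Quotient.mk (orbitRel (stabilizer G b) A) '' {a : A | (a, b) ∈ S}).Finite := by
  constructor
  · intro h b
    have hsub : Fmap2 b '' (Quotient.mk (orbitRel (stabilizer G b) A) '' {a : A | (a, b) ∈ S}) ⊆
        Quotient.mk (orbitRel G (A × B)) '' S := by
      rintro _ ⟨_, ⟨a, ha, rfl⟩, rfl⟩
      exact ⟨(a, b), ha, rfl⟩
    have hinj : Set.InjOn (Fmap2 b)
        (Quotient.mk (orbitRel (stabilizer G b) A) '' {a : A | (a, b) ∈ S}) := by
      rintro _ ⟨a, ha, rfl⟩ _ ⟨a', ha', rfl⟩ hxy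
      obtain ⟨g, hg⟩ := Quotient.exact hxy
      have hgb : g • b = b := congrArg Prod.snd hg
      have hga : g • a' = a := congrArg Prod.fst hg
      exact Quotient.sound ⟨⟨g, hgb⟩, hga⟩
    exact Set.Finite.of_finite_image (h.subset hsub) hinj
  · intro h
    have : Finite (Quotient (orbitRel G B)) := hB
    have hfin : (⋃ q : Quotient (orbitRel G B),
        Fmap2 q.out '' (Quotient.mk (orbitRel (stabilizer G q.out) A) ''
          {a : A | (a, q.out) ∈ S})).Finite :=
      Set.finite_iUnion fun q => (h q.out).image (Fmap2 q.out)
    refine hfin.subset ?_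
    rintro _ ⟨⟨a, b⟩, hab, rfl⟩
    obtain ⟨g, hg⟩ := MulAction.mem_orbit_iff.mp (Quotient.mk_out b (s := orbitRel G B))
    have hga : (g • a, (Quotient.mk (orbitRel G B) b).out) ∈ S := by
      have := hS g _ hab
      rwa [Prod.smul_mk, hg] at this
    refine Set.mem_iUnion.mpr ⟨Quotient.mk (orbitRel G B) b,
      ⟨Quotient.mk _ (g • a), ⟨g • a, hga, rfl⟩, ?_⟩⟩
    show Quotient.mk (orbitRel G (A × B)) (g • a, _) = Quotient.mk (orbitRel G (A × B)) (a, b)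
    refine Quotient.sound ⟨g, ?_⟩
    show g • (a, b) = _
    rw [Prod.smul_mk, hg]

/-- For G-finite G-sets A and B and a G-invariant S ⊆ A × B, TFAE:
(a) S is G-finite; (b) for every a ∈ A, S ∩ ({a} × B) is Stab_G(a)-finite;
(c) for every b ∈ B, S ∩ (A × {b}) is Stab_G(b)-finite. -/
theorem gFinite_product_tfae {G A B : Type*} [Group G] [MulAction G A] [MulAction G B]
    (hA : Finite (MulAction.orbitRel.Quotient G A))
    (hB : Finite (MulAction.orbitRel.Quotient G B))
    (S : Set (A × B)) (hS : ∀ (g : G), ∀ p ∈ S, g • p ∈ S) :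
    List.TFAE
      [Set.Finite (Quotient.mk (MulAction.orbitRel G (A × B)) '' S),
       ∀ a : A, Set.Finite
         (Quotient.mk (MulAction.orbitRel (MulAction.stabilizer G a) B) ''
           {b : B | (a, b) ∈ S}),
       ∀ b : B, Set.Finite
         (Quotient.mk (MulAction.orbitRel (MulAction.stabilizer G b) A) ''
           {a : A | (a, b) ∈ S})] := by
  tfae_have 1 ↔ 2 := aux_fst hA S hS
  tfae_have 1 ↔ 3 := aux_snd hB S hS
  tfae_finish
end

section
/- Let a group G act properly on a set M (i.e., all point stabilizers are finite, and more strongly: for every finite subsets F₁, F₂ ⊆ M only finitely many g ∈ G satisfy gF₁ ∩ F₂ ≠ ∅). Let A₀, A₁ be subgroups of G and E₀, E₁ subsets of M with E₀ ∩ E₁ ≠ ∅, where each E_ι is A_ι-invariant and A_ι-finite. Then E₀ ∩ E₁ is infinite if and only if A₀ ∩ A₁ is infinite. -/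
/-!
If `A₀ ⊓ A₁` is infinite, its orbit through a common point of `E₀` and `E₁` stays in `E₀ ∩ E₁`,
and is infinite because the action has finite fibres. Conversely, `E₀ ∩ E₁` lies in finitely many
sets `A₀ • y₀ ∩ A₁ • y₁`, so one of them, say `A₀ • x ∩ A₁ • x`, is infinite. Every `a ∈ A₀` with
`a • x ∈ A₁ • x` lies in `A₁ * s` for some `s` in the finite stabilizer of `x`, so some
`A₀ ∩ A₁ * s` is infinite; being a right coset of `A₀ ⊓ A₁`, it forces `A₀ ⊓ A₁` to be infinite.
-/

open MulAction

theorem Set.exists_infinite_inter_of_subset_biUnion {α ι κ : Type*} {E₀ E₁ : Set α}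
    {I : Set ι} {J : Set κ} (hI : I.Finite) (hJ : J.Finite) {S : ι → Set α} {T : κ → Set α}
    (hE₀ : E₀ ⊆ ⋃ i ∈ I, S i) (hE₁ : E₁ ⊆ ⋃ j ∈ J, T j) (h : (E₀ ∩ E₁).Infinite) :
    ∃ i ∈ I, ∃ j ∈ J, (S i ∩ T j).Infinite := by
  by_contra! hfin
  refine h ((hI.biUnion fun i hi => hJ.biUnion (hfin i hi)).subset ?_)
  rintro x ⟨hx₀, hx₁⟩
  obtain ⟨i, hi, hxi⟩ := Set.mem_iUnion₂.mp (hE₀ hx₀)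
  obtain ⟨j, hj, hxj⟩ := Set.mem_iUnion₂.mp (hE₁ hx₁)
  exact Set.mem_iUnion₂.mpr ⟨i, hi, Set.mem_iUnion₂.mpr ⟨j, hj, hxi, hxj⟩⟩

theorem MulAction.infinite_of_mapsTo_smul {G M : Type*} [Group G] [MulAction G M] {m : M}
    (hfib : ∀ m' : M, {g : G | g • m = m'}.Finite) {H : Set G} {E : Set M}
    (hH : H.Infinite) (hmaps : Set.MapsTo (· • m) H E) : E.Infinite :=
  fun hE => hH ((hE.preimage' fun m' _ => hfib m').subset hmaps)

theorem Subgroup.infinite_inf_of_infinite_setOf_mul_mem {G : Type*} [Group G]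
    {H K : Subgroup G} {s : G} (h : {g | g ∈ H ∧ g * s ∈ K}.Infinite) :
    ((H ⊓ K : Subgroup G) : Set G).Infinite := by
  obtain ⟨g₀, hg₀H, hg₀K⟩ := h.nonempty
  refine (h.image (mul_left_injective g₀⁻¹).injOn).mono ?_
  rintro _ ⟨g, ⟨hgH, hgK⟩, rfl⟩
  refine ⟨H.mul_mem hgH (H.inv_mem hg₀H), ?_⟩
  show g * g₀⁻¹ ∈ K
  rw [show g * g₀⁻¹ = g * s * (g₀ * s)⁻¹ by group]
  exact K.mul_mem hgK (K.inv_mem hg₀K)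

theorem Subgroup.orbit_eq_setOf {G M : Type*} [Group G] [MulAction G M] (A : Subgroup G)
    (y : M) : orbit A y = {x | ∃ g ∈ A, g • y = x} := by
  ext x
  constructor
  · rintro ⟨⟨g, hg⟩, rfl⟩
    exact ⟨g, hg, rfl⟩
  · rintro ⟨g, hg, rfl⟩
    exact ⟨⟨g, hg⟩, rfl⟩

theorem Subgroup.infinite_inf_of_infinite_inter_orbit {G M : Type*} [Group G] [MulAction G M]
    {x : M} (hx : (stabilizer G x : Set G).Finite) {A₀ A₁ : Subgroup G}
    (h : (orbit A₀ x ∩ orbit A₁ x).Infinite) : ((A₀ ⊓ A₁ : Subgroup G) : Set G).Infinite := by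
  have hT : {a : G | a ∈ A₀ ∧ a • x ∈ orbit A₁ x}.Infinite := by
    refine Set.Infinite.of_image (· • x) (h.mono ?_)
    rintro _ ⟨⟨a, rfl⟩, hy⟩
    exact ⟨a, ⟨a.2, hy⟩, rfl⟩
  -- `a • x = b • x` with `b ∈ A₁` puts `a⁻¹ * b` in the stabilizer and `a * (a⁻¹ * b) = b` in `A₁`
  have hcover : {a : G | a ∈ A₀ ∧ a • x ∈ orbit A₁ x} ⊆
      ⋃ s ∈ stabilizer G x, {g | g ∈ A₀ ∧ g * s ∈ A₁} := by
    rintro a ⟨ha, ⟨⟨b, hbA⟩, hb⟩⟩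
    replace hb : b • x = a • x := hb
    refine Set.mem_iUnion₂.mpr ⟨a⁻¹ * b, ?_, ha, by rwa [mul_inv_cancel_left]⟩
    rw [mem_stabilizer_iff, mul_smul, hb, inv_smul_smul]
  obtain ⟨s, -, hs⟩ : ∃ s ∈ stabilizer G x, {g | g ∈ A₀ ∧ g * s ∈ A₁}.Infinite := by
    by_contra! hfin
    exact hT ((hx.biUnion hfin).subset hcover)
  exact infinite_inf_of_infinite_setOf_mul_mem hs

theorem Subgroup.infinite_inf_of_infinite_inter_orbits {G M : Type*} [Group G] [MulAction G M]
    (hstab : ∀ x : M, (stabilizer G x : Set G).Finite) {A₀ A₁ : Subgroup G} {y₀ y₁ : M}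
    (h : (orbit A₀ y₀ ∩ orbit A₁ y₁).Infinite) : ((A₀ ⊓ A₁ : Subgroup G) : Set G).Infinite := by
  obtain ⟨x, hx₀, hx₁⟩ := h.nonempty
  rw [← orbit_eq_iff.mpr hx₀, ← orbit_eq_iff.mpr hx₁] at h
  exact infinite_inf_of_infinite_inter_orbit (hstab x) h

/-- If G acts properly on M, A₀, A₁ ≤ G, and E₀, E₁ are non-disjoint
A_ι-invariant A_ι-finite subsets of M, then E₀ ∩ E₁ is infinite iff A₀ ∩ A₁ is infinite. -/
theorem infinite_inter_iff_infinite_inter_subgroups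
    {G M : Type*} [Group G] [MulAction G M]
    (hproper : ∀ m m' : M, {g : G | g • m = m'}.Finite)
    (A₀ A₁ : Subgroup G) (E₀ E₁ : Set M)
    (hinv₀ : ∀ g ∈ A₀, ∀ x ∈ E₀, g • x ∈ E₀)
    (hinv₁ : ∀ g ∈ A₁, ∀ x ∈ E₁, g • x ∈ E₁)
    (hfin₀ : ∃ F : Finset M, E₀ ⊆ ⋃ y ∈ F, {x | ∃ g ∈ A₀, g • y = x})
    (hfin₁ : ∃ F : Finset M, E₁ ⊆ ⋃ y ∈ F, {x | ∃ g ∈ A₁, g • y = x})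
    (hmeet : (E₀ ∩ E₁).Nonempty) :
    (E₀ ∩ E₁).Infinite ↔ ((A₀ ⊓ A₁ : Subgroup G) : Set G).Infinite := by
  constructor
  · intro hE
    obtain ⟨F₀, hF₀⟩ := hfin₀
    obtain ⟨F₁, hF₁⟩ := hfin₁
    obtain ⟨y₀, -, y₁, -, hy⟩ :=
      Set.exists_infinite_inter_of_subset_biUnion F₀.finite_toSet F₁.finite_toSet hF₀ hF₁ hE
    rw [← Subgroup.orbit_eq_setOf, ← Subgroup.orbit_eq_setOf] at hy
    exact Subgroup.infinite_inf_of_infinite_inter_orbits (fun x => hproper x x) hy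
  · intro hA
    obtain ⟨m, hm₀, hm₁⟩ := hmeet
    exact MulAction.infinite_of_mapsTo_smul (hproper m) hA
      fun g hg => ⟨hinv₀ g hg.1 m hm₀, hinv₁ g hg.2 m hm₁⟩
end

section
/- Let Γ be a connected graph with metric d, E ⊆ Γ⁰ a nonempty set of vertices, x ∈ Γ⁰, and y ∈ Pr_E(x) := { u ∈ E : d(x,u) = d(x,E) } a nearest-point projection of x to E. Then for every z ∈ E and every vertex t on a geodesic from x to y (i.e., d(x,t) + d(t,y) = d(x,y)), one has d(z, t) ≥ (1/2)·d(z, y). -/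
/-- If y is a nearest-point projection of x to E ⊆ Γ⁰, then for every
z ∈ E and every vertex t on a geodesic from x to y, d(z,t) ≥ (1/2)·d(z,y). -/
theorem dist_to_geodesic_of_projection
    {A : Type*} (Γ : SimpleGraph A) (hconn : Γ.Connected)
    (E : Set A) (hE : E.Nonempty) (x y : A) (hyE : y ∈ E)
    (hproj : Γ.dist x y = ⨅ u : E, Γ.dist x (u : A)) :
    ∀ z ∈ E, ∀ t : A, Γ.dist x t + Γ.dist t y = Γ.dist x y →
      Γ.dist z y ≤ 2 * Γ.dist z t := by
  intro z hz t ht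
  have h1 : Γ.dist x y ≤ Γ.dist x z := by
    rw [hproj]
    exact ciInf_le (OrderBot.bddBelow _) (⟨z, hz⟩ : E)
  have h2 : Γ.dist x z ≤ Γ.dist x t + Γ.dist t z := hconn.dist_triangle
  have h3 : Γ.dist t y ≤ Γ.dist t z := by omega
  have h4 : Γ.dist z y ≤ Γ.dist z t + Γ.dist t y := hconn.dist_triangle
  have h5 : Γ.dist t z = Γ.dist z t := Γ.dist_comm
  omega
end

section
/- Let (f, α) be an appropriate pair with Karlsson function K_α, let Γ be a connected graph with Floyd metrics δ_a (a a vertex), and let s(ε, α) := K_α(ε) + (1/2)·α(2·K_α(ε)). Then for every set F of vertices of Γ (possibly with boundary points in the Floyd completion), every vertex a, and every ε > 0: H_α(F) ⊆ N_ε^{δ̄_a}(F) ∪ N_s^{d}(a), i.e., every vertex on an α-distorted path with endpoints in F either lies within Floyd-distance ε (based at a) from F, or within graph-distance s(ε,α) from a. -/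
/-! Split the distorted path through `x` at `x`. If one of the two halves is `δ`-short, the
triangle inequality puts `x` `ε`-close to an endpoint, which lies in `F`. Otherwise the Karlsson
bound gives a point of each half within `K ε` of `a`; these two points are `2 K ε`-close, so by
distortion they are at most `α (2 K ε)` steps apart along the path, and `x`, lying between them,
is at most half that many steps from one of them. -/

/-- A finite α-distorted path in a graph. -/
def IsDistPath {A : Type*} (Γ : SimpleGraph A) (α : ℕ → ℝ) {n : ℕ}
    (γ : Fin (n + 1) → A) : Prop :=
  (∀ i : Fin n, Γ.Adj (γ i.castSucc) (γ i.succ)) ∧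
  ∀ i j : Fin (n + 1), i ≤ j → ((j : ℕ) - (i : ℕ) : ℝ) ≤ α (Γ.dist (γ i) (γ j))

/-- The α-hull of F: all vertices lying on some α-distorted path with endpoints in F. -/
def distHull {A : Type*} (Γ : SimpleGraph A) (α : ℕ → ℝ) (F : Set A) : Set A :=
  {x | ∃ (n : ℕ) (γ : Fin (n + 1) → A), IsDistPath Γ α γ ∧
    γ 0 ∈ F ∧ γ (Fin.last n) ∈ F ∧ ∃ i, γ i = x}

section Paths

variable {A : Type*} {Γ : SimpleGraph A} {α : ℕ → ℝ} {n : ℕ} {γ : Fin (n + 1) → A}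

def pathSegment (γ : Fin (n + 1) → A) (i j : Fin (n + 1)) (hij : i ≤ j) : Fin (j - i + 1) → A :=
  fun k => γ ⟨i + k, by have := k.isLt; omega⟩

def pathLength (δ : A → A → ℝ) {m : ℕ} (γ : Fin (m + 1) → A) : ℝ :=
  ∑ k : Fin m, δ (γ k.castSucc) (γ k.succ)

def IsKarlssonFunction (Γ : SimpleGraph A) (α : ℕ → ℝ) (δ : A → A → ℝ) (a : A)
    (K : ℝ → ℕ) : Prop :=
  ∀ (n : ℕ) (γ : Fin (n + 1) → A), IsDistPath Γ α γ → 0 < pathLength δ γ →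
    (⨅ i, Γ.dist a (γ i)) ≤ K (pathLength δ γ)

theorem IsDistPath.segment (hγ : IsDistPath Γ α γ) {i j : Fin (n + 1)} (hij : i ≤ j) :
    IsDistPath Γ α (pathSegment γ i j hij) := by
  refine ⟨fun k => hγ.1 ⟨i + k, by omega⟩, fun p q hpq => ?_⟩
  have hpq' : (p : ℕ) ≤ q := hpq
  calc ((q : ℕ) - (p : ℕ) : ℝ) = ((i + q : ℕ) : ℝ) - ((i + p : ℕ) : ℝ) := by push_cast; ring
    _ ≤ _ := hγ.2 ⟨i + p, by omega⟩ ⟨i + q, by omega⟩ (Fin.mk_le_mk.mpr (by omega))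

theorem dist_le_sub_of_adj (hadj : ∀ k : Fin n, Γ.Adj (γ k.castSucc) (γ k.succ))
    {i j : Fin (n + 1)} (hij : i ≤ j) : Γ.dist (γ i) (γ j) ≤ j - i := by
  induction j using Fin.induction with
  | zero => simp [Fin.le_zero_iff.mp hij]
  | succ k ih =>
    rcases eq_or_lt_of_le hij with rfl | hlt
    · simp
    have hik : i ≤ k.castSucc := Fin.le_castSucc_iff.mpr hlt
    have hik' : (i : ℕ) ≤ k := hik
    have hstep := (hadj k).reachable.dist_triangle_right (γ i)
    rw [SimpleGraph.dist_eq_one_iff_adj.mpr (hadj k)] at hstep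
    have := ih hik
    simp only [Fin.val_castSucc, Fin.val_succ] at this ⊢
    omega

theorem le_pathLength_of_triangle {δ : A → A → ℝ} (hδ_self : ∀ x, δ x x = 0)
    (hδ_tri : ∀ x y z, δ x z ≤ δ x y + δ y z) {m : ℕ} (γ : Fin (m + 1) → A) :
    δ (γ 0) (γ (Fin.last m)) ≤ pathLength δ γ := by
  induction m with
  | zero => simp [pathLength, hδ_self]
  | succ m ih =>
    have := ih (γ ∘ Fin.castSucc)
    simp only [pathLength, Function.comp_apply] at this
    rw [pathLength, Fin.sum_univ_castSucc]
    exact (hδ_tri _ (γ (Fin.last m).castSucc) _).trans (add_le_add_left this _)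

theorem le_pathLength_pathSegment {δ : A → A → ℝ} (hδ_self : ∀ x, δ x x = 0)
    (hδ_tri : ∀ x y z, δ x z ≤ δ x y + δ y z) {i j : Fin (n + 1)} (hij : i ≤ j) :
    δ (γ i) (γ j) ≤ pathLength δ (pathSegment γ i j hij) := by
  have hij' : (i : ℕ) ≤ j := hij
  convert le_pathLength_of_triangle hδ_self hδ_tri (pathSegment γ i j hij) using 2
  · simp [pathSegment]
  · exact congrArg γ (Fin.ext (by simp; omega))

theorem IsDistPath.exists_dist_le_of_lt_pathLength {δ : A → A → ℝ} {a : A} {K : ℝ → ℕ}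
    (hK : IsKarlssonFunction Γ α δ a K) (hK_anti : Antitone K) (hγ : IsDistPath Γ α γ)
    {i j : Fin (n + 1)} (hij : i ≤ j) {ε : ℝ} (hε : 0 < ε)
    (hlen : ε < pathLength δ (pathSegment γ i j hij)) :
    ∃ l, i ≤ l ∧ l ≤ j ∧ Γ.dist a (γ l) ≤ K ε := by
  obtain ⟨k, hk⟩ := ciInf_mem fun k => Γ.dist a (pathSegment γ i j hij k)
  have hij' : (i : ℕ) ≤ j := hij
  refine ⟨⟨i + k, by omega⟩, Fin.mk_le_mk.mpr (by omega), Fin.mk_le_mk.mpr (by omega), ?_⟩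
  calc Γ.dist a (pathSegment γ i j hij k) = ⨅ k, Γ.dist a (pathSegment γ i j hij k) := hk
    _ ≤ K (pathLength δ (pathSegment γ i j hij)) := hK _ _ (hγ.segment hij) (hε.trans hlen)
    _ ≤ K ε := hK_anti hlen.le

theorem IsDistPath.dist_le_of_between (hconn : Γ.Connected) (hα_mono : Monotone α)
    (hγ : IsDistPath Γ α γ) {a : A} {R : ℕ} {p i q : Fin (n + 1)} (hpi : p ≤ i) (hiq : i ≤ q)
    (hp : Γ.dist a (γ p) ≤ R) (hq : Γ.dist a (γ q) ≤ R) :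
    (Γ.dist a (γ i) : ℝ) ≤ R + α (2 * R) / 2 := by
  have hpq : Γ.dist (γ p) (γ q) ≤ 2 * R := by
    have htri : Γ.dist (γ p) (γ q) ≤ Γ.dist (γ p) a + Γ.dist a (γ q) := hconn.dist_triangle
    rw [SimpleGraph.dist_comm (v := a)] at htri
    omega
  have hspan : ((q : ℕ) - (p : ℕ) : ℝ) ≤ α (2 * R) :=
    (hγ.2 p q (hpi.trans hiq)).trans (hα_mono hpq)
  have hfromp : Γ.dist a (γ i) ≤ R + (i - p) :=
    hconn.dist_triangle.trans (add_le_add hp (dist_le_sub_of_adj hγ.1 hpi))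
  have hfromq : Γ.dist a (γ i) ≤ R + (q - i) := by
    have := dist_le_sub_of_adj hγ.1 hiq
    rw [SimpleGraph.dist_comm] at this
    exact hconn.dist_triangle.trans (add_le_add hq this)
  have hpi' : (p : ℕ) ≤ i := hpi
  have hiq' : (i : ℕ) ≤ q := hiq
  have hsum : 2 * Γ.dist a (γ i) + p ≤ 2 * R + q := by omega
  have hsum' : (2 * Γ.dist a (γ i) + p : ℝ) ≤ 2 * R + q := by exact_mod_cast hsum
  linarith

end Paths

theorem hull_local_structure_general
    {A : Type*} (Γ : SimpleGraph A) (hconn : Γ.Connected)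
    (α : ℕ → ℝ) (hα_mono : Monotone α)
    (a : A)
    -- the Floyd metric based at a
    (δ : A → A → ℝ)
    (hδ_self : ∀ x, δ x x = 0) (hδ_symm : ∀ x y, δ x y = δ y x)
    (hδ_tri : ∀ x y z, δ x z ≤ δ x y + δ y z)
    -- K is a Karlsson function for (f, α): nonincreasing, and d(a, Im γ) ≤ K(length γ)
    (K : ℝ → ℕ) (hK_anti : Antitone K)
    (hK : ∀ (n : ℕ) (γ : Fin (n + 1) → A), IsDistPath Γ α γ →
      ∀ L : ℝ, L = ∑ i : Fin n, δ (γ i.castSucc) (γ i.succ) → 0 < L →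
      (⨅ i, Γ.dist a (γ i)) ≤ K L)
    (ε : ℝ) (hε : 0 < ε) :
    ∀ (F : Set A), ∀ x ∈ distHull Γ α F,
      (∃ y ∈ F, δ x y ≤ ε) ∨ ((Γ.dist a x : ℝ) ≤ (K ε : ℝ) + α (2 * K ε) / 2) := by
  intro F x hx
  obtain ⟨n, γ, hγ, h0, hlast, i, rfl⟩ := hx
  by_cases hshort₁ : pathLength δ (pathSegment γ 0 i (Fin.zero_le i)) ≤ ε
  · exact .inl ⟨γ 0, h0, hδ_symm _ _ ▸
      (le_pathLength_pathSegment hδ_self hδ_tri (Fin.zero_le i)).trans hshort₁⟩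
  by_cases hshort₂ : pathLength δ (pathSegment γ i (Fin.last n) (Fin.le_last i)) ≤ ε
  · exact .inl ⟨γ (Fin.last n), hlast,
      (le_pathLength_pathSegment hδ_self hδ_tri (Fin.le_last i)).trans hshort₂⟩
  push Not at hshort₁ hshort₂
  have hKarlsson : IsKarlssonFunction Γ α δ a K := fun n γ hγ hpos => hK n γ hγ _ rfl hpos
  obtain ⟨p, -, hpi, hp⟩ := hγ.exists_dist_le_of_lt_pathLength hKarlsson hK_anti _ hε hshort₁
  obtain ⟨q, hiq, -, hq⟩ := hγ.exists_dist_le_of_lt_pathLength hKarlsson hK_anti _ hε hshort₂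
  exact .inr (hγ.dist_le_of_between hconn hα_mono hpi hiq hp hq)

/-- With s(ε,α) := K_α(ε) + α(2K_α(ε))/2, every vertex of the α-hull
of F is either within Floyd-distance ε (based at a) of F, or within graph-distance
s(ε,α) of a: H_α(F) ⊆ N_ε^{δ̄_a}(F) ∪ N_s^d(a). -/
theorem hull_local_structure
    {A : Type*} (Γ : SimpleGraph A) (hconn : Γ.Connected)
    (α : ℕ → ℝ) (hα_mono : Monotone α) (hα_ge : ∀ n : ℕ, (n : ℝ) ≤ α n)
    (a : A)
    -- the Floyd metric based at a
    (δ : A → A → ℝ)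
    (hδ_self : ∀ x, δ x x = 0) (hδ_symm : ∀ x y, δ x y = δ y x)
    (hδ_nonneg : ∀ x y, 0 ≤ δ x y) (hδ_tri : ∀ x y z, δ x z ≤ δ x y + δ y z)
    -- K is a Karlsson function for (f, α): nonincreasing, and d(a, Im γ) ≤ K(length γ)
    (K : ℝ → ℕ) (hK_anti : Antitone K)
    (hK : ∀ (n : ℕ) (γ : Fin (n + 1) → A), IsDistPath Γ α γ →
      ∀ L : ℝ, L = ∑ i : Fin n, δ (γ i.castSucc) (γ i.succ) → 0 < L →
      (⨅ i, Γ.dist a (γ i)) ≤ K L)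
    (ε : ℝ) (hε : 0 < ε) :
    ∀ (F : Set A), ∀ x ∈ distHull Γ α F,
      (∃ y ∈ F, δ x y ≤ ε) ∨ ((Γ.dist a x : ℝ) ≤ (K ε : ℝ) + α (2 * K ε) / 2) :=
  hull_local_structure_general Γ hconn α hα_mono a δ hδ_self hδ_symm hδ_tri K hK_anti hK ε hε
end

section
/- Let G act 3-discontinuously on a compactum X̃ = T ⊔ A with A discrete, and let E ⊆ A. For every point p ∈ T \ ∂E, there exists an E-stable neighborhood: a neighborhood P of p in X̃ such that Pr_E(P ∩ A) = Pr_E(Q ∩ A) for every neighborhood Q ⊆ P of p. Moreover, if P and Q are both E-stable neighborhoods of p then Pr_E(P ∩ A) = Pr_E(Q ∩ A), given that Pr_E(B) is finite whenever ∂E ∩ ∂B = ∅. -/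
/-- Given that Pr_E(B) is finite whenever ∂E ∩ ∂B = ∅, every point
p ∈ T \ ∂E has an E-stable neighborhood P (Pr_E(Q ∩ A) = Pr_E(P ∩ A) for all smaller
neighborhoods Q of p), and any two E-stable neighborhoods of p have the same
projection. -/
theorem exists_stable_neighborhood
    {X : Type*} [TopologicalSpace X] [CompactSpace X] [T2Space X]
    (A : Set X) (hAopen : IsOpen A) (hAdisc : DiscreteTopology ↥A)
    (Γ : SimpleGraph ↥A) (hconn : Γ.Connected)
    (E : Set ↥A) (hEne : E.Nonempty)
    -- the nearest-point projection to E
    (Pr : Set ↥A → Set ↥A)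
    (hPr : ∀ B : Set ↥A,
      Pr B = {v : ↥A | v ∈ E ∧ ∃ b ∈ B, Γ.dist b v = ⨅ u : E, Γ.dist b (u : ↥A)})
    -- Pr_E(B) is finite whenever ∂E ∩ ∂B = ∅ (∂S = T ∩ closure S, T = X \ A)
    (hfin : ∀ B : Set ↥A,
      (closure (Subtype.val '' E) ∩ Aᶜ) ∩ (closure (Subtype.val '' B) ∩ Aᶜ) = ∅ →
      (Pr B).Finite)
    -- p ∈ T \ ∂E
    (p : X) (hpT : p ∈ Aᶜ) (hpE : p ∉ closure (Subtype.val '' E)) :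
    (∃ P ∈ nhds p, ∀ Q ∈ nhds p, Q ⊆ P →
        Pr {a : ↥A | (a : X) ∈ Q} = Pr {a : ↥A | (a : X) ∈ P}) ∧
    (∀ P Q : Set X, P ∈ nhds p → Q ∈ nhds p →
      (∀ P' ∈ nhds p, P' ⊆ P →
        Pr {a : ↥A | (a : X) ∈ P'} = Pr {a : ↥A | (a : X) ∈ P}) →
      (∀ Q' ∈ nhds p, Q' ⊆ Q →
        Pr {a : ↥A | (a : X) ∈ Q'} = Pr {a : ↥A | (a : X) ∈ Q}) →
      Pr {a : ↥A | (a : X) ∈ P} = Pr {a : ↥A | (a : X) ∈ Q}) := by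
  constructor
  · -- existence of a stable neighborhood
    have hmono : ∀ B B' : Set ↥A, B ⊆ B' → Pr B ⊆ Pr B' := by
      intro B B' h v hv
      rw [hPr] at hv ⊢
      obtain ⟨hvE, b, hb, hd⟩ := hv
      exact ⟨hvE, b, h hb, hd⟩
    have hopen : (closure (Subtype.val '' E))ᶜ ∈ nhds p :=
      (isClosed_closure.isOpen_compl).mem_nhds hpE
    obtain ⟨N, hN, hNc, hNs⟩ := exists_mem_nhds_isClosed_subset hopen
    have hfinQ : ∀ Q : Set X, Q ⊆ N → (Pr {a : ↥A | (a : X) ∈ Q}).Finite := by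
      intro Q hQ
      apply hfin
      apply Set.eq_empty_of_forall_notMem
      rintro x ⟨⟨hxE, -⟩, hxB, -⟩
      have hsub : Subtype.val '' {a : ↥A | (a : X) ∈ Q} ⊆ N := by
        rintro y ⟨a, ha, rfl⟩; exact hQ ha
      have hxN : x ∈ N := hNc.closure_subset_iff.mpr hsub hxB
      exact hNs hxN hxE
    set S := {n : ℕ | ∃ Q ∈ nhds p, Q ⊆ N ∧ (Pr {a : ↥A | (a : X) ∈ Q}).ncard = n}
      with hS
    have hSne : S.Nonempty := ⟨_, N, hN, subset_rfl, rfl⟩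
    obtain ⟨Q₀, hQ₀n, hQ₀s, hQ₀card⟩ := Nat.sInf_mem hSne
    refine ⟨Q₀, hQ₀n, ?_⟩
    intro Q hQn hQs
    have h1 : Pr {a : ↥A | (a : X) ∈ Q} ⊆ Pr {a : ↥A | (a : X) ∈ Q₀} :=
      hmono _ _ (fun a ha => hQs ha)
    have hcard : (Pr {a : ↥A | (a : X) ∈ Q₀}).ncard ≤
        (Pr {a : ↥A | (a : X) ∈ Q}).ncard := by
      rw [hQ₀card]
      exact Nat.sInf_le ⟨Q, hQn, hQs.trans hQ₀s, rfl⟩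
    exact Set.eq_of_subset_of_ncard_le h1 hcard (hfinQ Q₀ hQ₀s)
  · -- uniqueness of the stable projection
    intro P Q hP hQ hPst hQst
    have h1 := hPst (P ∩ Q) (Filter.inter_mem hP hQ) Set.inter_subset_left
    have h2 := hQst (P ∩ Q) (Filter.inter_mem hP hQ) Set.inter_subset_right
    rw [← h1, ← h2]
end
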